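/- Every theorem of NRA_{m,n} is valid on every (m,n)-accessible N-frame (soundness of NRA_{m,n}). -/

import Mathlib

inductive Formula : Type
  | bot : Formula
  | var : ℕ → Formula
  | neg : Formula → Formula
  | or : Formula → Formula → Formula
  | box : Formula → Formula
  deriving DecidableEq

namespace Formula

def imp (φ ψ : Formula) : Formula := .or (.neg φ) ψ

def and (φ ψ : Formula) : Formula := .neg (.or (.neg φ) (.neg ψ))

/-- □^n φ -/
def boxn : ℕ → Formula → Formula
  | 0, φ => φ
  | k+1, φ => .box (boxn k φ)

/-- the set of subformulas -/
def sub : Formula → Finset Formula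
  | .bot => {.bot}
  | .var p => {.var p}
  | .neg φ => insert (.neg φ) φ.sub
  | .or φ ψ => insert (.or φ ψ) (φ.sub ∪ ψ.sub)
  | .box φ => insert (.box φ) φ.sub

/-- ∼ρ -/
def negg : Formula → Formula
  | .neg φ => φ
  | φ => .neg φ

end Formula

def NSub (ψ : Formula) : Finset Formula := ψ.sub ∪ ψ.sub.image Formula.negg

/-- boolean evaluation treating boxed formulas and variables as atoms -/
def evalP (v : Formula → Bool) : Formula → Bool
  | .bot => false
  | .var p => v (.var p)
  | .neg φ => !(evalP v φ)
  | .or φ ψ => evalP v φ || evalP v ψ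
  | .box φ => v (.box φ)

/-- propositional tautologies in the modal language -/
def Tautology (φ : Formula) : Prop := ∀ v, evalP v φ = true

/-- Provability in NA_{m,n} (ros = false) and NRA_{m,n} (ros = true):
    propositional tautologies, the scheme □^n φ → □^m φ, modus ponens,
    necessitation, and (if ros) the rule Ros^□ : ¬□φ / ¬□□φ. -/
inductive Prov (m n : ℕ) (ros : Bool) : Formula → Prop
  | taut {φ} : Tautology φ → Prov m n ros φ
  | axA (φ) : Prov m n ros ((Formula.boxn n φ).imp (Formula.boxn m φ))
  | mp {φ ψ} : Prov m n ros (φ.imp ψ) → Prov m n ros φ → Prov m n ros ψ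
  | nec {φ} : Prov m n ros φ → Prov m n ros (.box φ)
  | ros {φ} : ros = true → Prov m n ros (.neg (.box φ)) →
      Prov m n ros (.neg (.box (.box φ)))

/-- An N-frame on world set W: a binary relation R_φ for each formula φ. -/
abbrev NFrame (W : Type) := Formula → W → W → Prop

structure NModel (W : Type) where
  Rel : NFrame W
  V : W → ℕ → Prop

/-- satisfaction in an N-model -/
def Sat {W : Type} (M : NModel W) : W → Formula → Prop
  | _, .bot => False
  | w, .var p => M.V w p
  | w, .neg φ => ¬ Sat M w φ
  | w, .or φ ψ => Sat M w φ ∨ Sat M w ψ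
  | w, .box φ => ∀ w', M.Rel φ w w' → Sat M w' φ

/-- x R_φ^k y : there is a φ-path of length k from x to y -/
def FPath {W : Type} (R : NFrame W) (φ : Formula) : ℕ → W → W → Prop
  | 0, x, y => x = y
  | k+1, x, y => ∃ w, R (Formula.boxn k φ) x w ∧ FPath R φ k w y

/-- (m,n)-accessibility for φ -/
def AccFor {W : Type} (R : NFrame W) (m n : ℕ) (φ : Formula) : Prop :=
  ∀ x y, FPath R φ m x y → FPath R φ n x y

/-- Γ-(m,n)-accessibility -/
def SubAcc {W : Type} (R : NFrame W) (m n : ℕ) (Γ : Finset Formula) : Prop :=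
  ∀ φ, Formula.boxn m φ ∈ Γ → AccFor R m n φ

/-- (m,n)-accessibility -/
def Accessible {W : Type} (R : NFrame W) (m n : ℕ) : Prop :=
  ∀ φ, AccFor R m n φ

def ValidM {W : Type} (M : NModel W) (ψ : Formula) : Prop := ∀ w, Sat M w ψ

def ValidF {W : Type} (R : NFrame W) (ψ : Formula) : Prop :=
  ∀ V : W → ℕ → Prop, ValidM ⟨R, V⟩ ψ

/-!
Soundness is proved by induction on derivations. Since `□^k φ` holds at `w` exactly when `φ`
holds at the end of every `φ`-path of length `k` from `w`, accessibility makes the axiom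
`□^n φ → □^m φ` true. The interesting case is the rule Ros^□. If `¬□φ` is valid on all
`(m,n)`-accessible frames, the empty frame (where `□φ` holds) cannot be accessible, which forces
`m = 0 < n = k + 1`; accessibility then provides, for every `ρ`, a `ρ`-cycle of length `k + 1`
through every world. If `□φ = □^k ρ` for some `ρ`, the first step of the `ρ`-cycle is an
`R_{□φ}`-successor, where `¬□φ` holds, so `¬□□φ` holds. Otherwise a two-world frame, with `R_φ` removed at one world, is
accessible and makes `□φ` true there, contradicting the validity of `¬□φ`.
-/

namespace Formula

theorem boxn_succ' (k : ℕ) (φ : Formula) : boxn (k + 1) φ = boxn k (.box φ) := by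
  induction k with
  | zero => rfl
  | succ k ih => rw [boxn, ih, boxn]

end Formula

section Semantics

variable {W : Type} (M : NModel W)

theorem sat_imp (w : W) (φ ψ : Formula) : Sat M w (φ.imp ψ) ↔ (Sat M w φ → Sat M w ψ) :=
  imp_iff_not_or.symm

theorem sat_boxn_iff (φ : Formula) (k : ℕ) (w : W) :
    Sat M w (Formula.boxn k φ) ↔ ∀ y, FPath M.Rel φ k w y → Sat M y φ := by
  induction k generalizing w with
  | zero => exact ⟨fun h y hy => hy ▸ h, fun h => h w rfl⟩
  | succ k ih =>
    simp only [Formula.boxn, Sat, ih, FPath]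
    exact ⟨fun h y ⟨u, hu, hy⟩ => h u hu y hy, fun h u hu y hy => h y ⟨u, hu, hy⟩⟩

theorem sat_of_tautology (w : W) {φ : Formula} (h : Tautology φ) : Sat M w φ := by
  classical
  let v : Formula → Bool := fun χ => decide (Sat M w χ)
  have evalP_iff : ∀ ρ, evalP v ρ = true ↔ Sat M w ρ := by
    intro ρ
    induction ρ with
    | bot => simp [evalP, Sat]
    | var p => exact decide_eq_true_iff
    | neg ψ ih => simp [evalP, Sat, ← ih]
    | or ψ χ ih₁ ih₂ => simp [evalP, Sat, ih₁, ih₂]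
    | box ψ => simp [evalP, v]
  exact (evalP_iff φ).1 (h v)

end Semantics

section Frames

variable {W : Type} {m n : ℕ}

theorem accessible_empty (h : m = 0 → n = 0) :
    Accessible (fun _ _ _ => False : NFrame W) m n := by
  intro ρ x y hxy
  cases m with
  | zero => rwa [h rfl]
  | succ m => exact hxy.elim fun _ hu => hu.1.elim

theorem Accessible.exists_rel {R : NFrame W} {k : ℕ} (hR : Accessible R 0 (k + 1))
    {ρ χ : Formula} (hρ : Formula.boxn k ρ = χ) (w : W) : ∃ u, R χ w u := by
  obtain ⟨u, hu, -⟩ := hR ρ w w rfl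
  exact ⟨u, hρ ▸ hu⟩

def blockFrame (φ : Formula) : NFrame Bool := fun χ x _ => x = true → χ ≠ φ

theorem fpath_blockFrame_false (φ ρ : Formula) (j : ℕ) (y : Bool) :
    FPath (blockFrame φ) ρ (j + 1) false y := by
  induction j with
  | zero => exact ⟨y, nofun, rfl⟩
  | succ j ih => exact ⟨false, nofun, ih⟩

theorem accessible_blockFrame {φ : Formula} {k : ℕ} (hφ : ∀ ρ, Formula.boxn k ρ ≠ φ) :
    Accessible (blockFrame φ) 0 (k + 1) := by
  rintro ρ x _ rfl
  cases k with
  | zero => exact ⟨x, fun _ => hφ ρ, rfl⟩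
  | succ j => exact ⟨false, fun _ => hφ ρ, fpath_blockFrame_false φ ρ j x⟩

end Frames

theorem validF_neg_box_box {m n : ℕ} {φ : Formula}
    (ih : ∀ (W : Type) (R : NFrame W), Accessible R m n → ValidF R (.neg (.box φ)))
    (W : Type) (R : NFrame W) (hR : Accessible R m n) : ValidF R (.neg (.box (.box φ))) := by
  obtain ⟨rfl, k, rfl⟩ : m = 0 ∧ ∃ k, n = k + 1 := by
    by_contra hmn
    exact ih Unit _ (accessible_empty fun hm => by_contra fun _ => hmn ⟨hm, n - 1, by omega⟩)
      (fun _ _ => True) () nofun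
  by_cases hφ : ∃ ρ, Formula.boxn k ρ = .box φ
  · obtain ⟨ρ, hρ⟩ := hφ
    intro V w hbox
    obtain ⟨u, hu⟩ := hR.exists_rel hρ w
    exact ih W R hR V u (hbox u hu)
  · have hφ' : ∀ ρ, Formula.boxn k ρ ≠ φ := fun ρ hρ =>
      hφ ⟨.box ρ, by rw [← Formula.boxn_succ', Formula.boxn, hρ]⟩
    exact (ih Bool _ (accessible_blockFrame hφ') (fun _ _ => True) true
      fun _ hu => (hu rfl rfl).elim).elim

theorem Prov.validF {m n : ℕ} {b : Bool} {ψ : Formula} (h : Prov m n b ψ) :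
    ∀ (W : Type) (R : NFrame W), Accessible R m n → ValidF R ψ := by
  induction h with
  | taut ht => exact fun W R _ V w => sat_of_tautology _ w ht
  | axA φ =>
    intro W R hR V w
    simp only [sat_imp, sat_boxn_iff]
    exact fun hn y hy => hn y (hR φ w y hy)
  | mp _ _ ih₁ ih₂ =>
    exact fun W R hR V w => (sat_imp _ w _ _).1 (ih₁ W R hR V w) (ih₂ W R hR V w)
  | nec _ ih => exact fun W R hR V _ u _ => ih W R hR V u
  | ros _ _ ih => exact validF_neg_box_box ih

theorem stmt10 (m n : ℕ) (ψ : Formula) (h : Prov m n true ψ) :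
    ∀ (W : Type) [Nonempty W] (R : NFrame W),
      Accessible R m n → ValidF R ψ :=
  fun W _ R hR => h.validF W R hR
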